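/- Let T be a set of arcs in the infinite strip satisfying condition (B). Then for every arc u and every marked point p, if T_u ∩ [p,−] is nonempty, it contains a unique minimal element with respect to the linear order >_p. -/
import Mathlib


/-- A marked point of the infinite strip `B∞`: an upper point `ℓ i` or a lower point `r j`. -/
inductive MPoint : Type
  | up : ℤ → MPoint
  | low : ℤ → MPoint
deriving DecidableEq

namespace Strip

open MPoint

/-- A curve is an unordered pair of marked points. -/
abbrev Curve := Sym2 MPoint

/-- Edges of the strip: `{ℓ_i, ℓ_{i+1}}` or `{r_i, r_{i+1}}`. -/
def IsEdge (c : Curve) : Prop :=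
  ∃ i : ℤ, c = s(up i, up (i + 1)) ∨ c = s(low i, low (i + 1))

/-- Arcs: non-degenerate, non-edge unordered pairs of marked points. -/
def IsArc (c : Curve) : Prop := ¬ c.IsDiag ∧ ¬ IsEdge c

/-- A connecting arc joins an upper and a lower marked point. -/
def IsConnecting (c : Curve) : Prop := ∃ i j : ℤ, c = s(up i, low j)

/-- The crossing relation on curves of the strip, given by the explicit index
conditions of Liu–Paquette (cases according to the type of `u`). -/
def Crosses (u v : Curve) : Prop :=
  (∃ i j p q : ℤ, ((i < p ∧ p < j ∧ j < q) ∨ (p < i ∧ i < q ∧ q < j)) ∧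
      u = s(up i, up j) ∧ v = s(up p, up q)) ∨
  (∃ i j p q : ℤ, (i < p ∧ p < j) ∧ u = s(up i, up j) ∧ v = s(up p, low q)) ∨
  (∃ i j p q : ℤ, ((i > p ∧ p > j ∧ j > q) ∨ (p > i ∧ i > q ∧ q > j)) ∧
      u = s(low i, low j) ∧ v = s(low p, low q)) ∨
  (∃ i j p q : ℤ, (i > q ∧ q > j) ∧ u = s(low i, low j) ∧ v = s(up p, low q)) ∨
  (∃ i j p q : ℤ, (p < i ∧ i < q) ∧ u = s(up i, low j) ∧ v = s(up p, up q)) ∨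
  (∃ i j p q : ℤ, (p > j ∧ j > q) ∧ u = s(up i, low j) ∧ v = s(low p, low q)) ∨
  (∃ i j p q : ℤ, ((i > p ∧ j > q) ∨ (i < p ∧ j < q)) ∧
      u = s(up i, low j) ∧ v = s(up p, low q))

/-- The translation `τ` on marked points, shifting indices by `+1`. -/
def tauP : MPoint → MPoint
  | up i => up (i + 1)
  | low i => low (i + 1)

/-- The inverse translation `τ⁻¹` on marked points. -/
def tauInvP : MPoint → MPoint
  | up i => up (i - 1)
  | low i => low (i - 1)

/-- The translation `τ` on curves. -/
def tau (c : Curve) : Curve := c.map tauP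

/-- The inverse translation `τ⁻¹` on curves. -/
def tauInv (c : Curve) : Curve := c.map tauInvP

/-- `key p q` is the position of the curve `[p,q]` in the clockwise linear order `>_p`
on the set `[p,−]` of curves at `p`, valued in `ℤ ×ₗ ℤ` (lexicographic order).
For `p = ℓ_P`: curves to upper points right of `p` (tier 2, increasing with index),
then connecting curves (tier 1, decreasing with index),
then curves to upper points left of `p` (tier 0, decreasing with index); dually for lower `p`. -/
def key : MPoint → MPoint → ℤ ×ₗ ℤ
  | up P, up e => if P < e then toLex (2, e) else toLex (0, -e)
  | up _, low c => toLex (1, -c)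
  | low P, low e => if P < e then toLex (2, e) else toLex (0, -e)
  | low _, up c => toLex (1, -c)

/-- `GtAt p u v` means `u >_p v`: `u` and `v` are curves sharing the endpoint `p`
and `u` is bigger than `v` in the clockwise linear order at `p`. -/
def GtAt (p : MPoint) (u v : Curve) : Prop :=
  ∃ x y : MPoint, x ≠ p ∧ y ≠ p ∧ u = s(p, x) ∧ v = s(p, y) ∧ key p y < key p x

/-- `u₃` is a middle term from `u₂` to `u₁`: a curve (arc or edge) with
`u₂ <_{p₁} u₃ <_{p₂} u₁` for some marked points `p₁`, `p₂`. -/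
def IsMiddleTerm (u₂ u₁ u₃ : Curve) : Prop :=
  ¬ u₃.IsDiag ∧ ∃ p₁ p₂ : MPoint, GtAt p₁ u₃ u₂ ∧ GtAt p₂ u₁ u₃

/-- `nc T`: the set of arcs crossing no arc of `T`. -/
def nc (T : Set Curve) : Set Curve :=
  {u | IsArc u ∧ ∀ v ∈ T, ¬ Crosses u v}

/-- `T` is a Ptolemy diagram: a set of arcs such that for any two crossing arcs
`[p,q],[i,j] ∈ T`, those of `[p,i],[p,j],[q,i],[q,j]` which are arcs lie in `T`. -/
def IsPtolemy (T : Set Curve) : Prop :=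
  (∀ u ∈ T, IsArc u) ∧
  ∀ p q i j : MPoint, s(p, q) ∈ T → s(i, j) ∈ T → Crosses s(p, q) s(i, j) →
    (IsArc s(p, i) → s(p, i) ∈ T) ∧ (IsArc s(p, j) → s(p, j) ∈ T) ∧
    (IsArc s(q, i) → s(q, i) ∈ T) ∧ (IsArc s(q, j) → s(q, j) ∈ T)

/-- `T_u`: the set of arcs of `T` crossing `u`. -/
def crossSet (T : Set Curve) (u : Curve) : Set Curve := {v ∈ T | Crosses v u}

/-- `p` is upper left `T`-bounded: `[p, ℓ_i] ∉ T` for all sufficiently small `i`. -/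
def UpperLeftBounded (T : Set Curve) (p : MPoint) : Prop :=
  ∃ j : ℤ, ∀ i : ℤ, i < j → s(p, up i) ∉ T

/-- `p` is upper right `T`-bounded: `[p, ℓ_i] ∉ T` for all sufficiently large `i`. -/
def UpperRightBounded (T : Set Curve) (p : MPoint) : Prop :=
  ∃ j : ℤ, ∀ i : ℤ, i > j → s(p, up i) ∉ T

/-- `p` is lower left `T`-bounded: `[p, r_i] ∉ T` for all sufficiently large `i`. -/
def LowerLeftBounded (T : Set Curve) (p : MPoint) : Prop :=
  ∃ j : ℤ, ∀ i : ℤ, i > j → s(p, low i) ∉ T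

/-- `p` is lower right `T`-bounded: `[p, r_i] ∉ T` for all sufficiently small `i`. -/
def LowerRightBounded (T : Set Curve) (p : MPoint) : Prop :=
  ∃ j : ℤ, ∀ i : ℤ, i < j → s(p, low i) ∉ T

/-- Condition (B): every lower right `T`-bounded marked point is upper right
`T`-bounded, and every upper left `T`-bounded marked point is lower left `T`-bounded. -/
def CondB (T : Set Curve) : Prop :=
  ∀ p : MPoint, (LowerRightBounded T p → UpperRightBounded T p) ∧
    (UpperLeftBounded T p → LowerLeftBounded T p)

/-- Condition (B'): the dual of condition (B). -/
def CondB' (T : Set Curve) : Prop :=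
  ∀ p : MPoint, (LowerLeftBounded T p → UpperLeftBounded T p) ∧
    (UpperRightBounded T p → LowerRightBounded T p)

/-- Condition (C): `T ∪ nc T` contains a connecting arc. -/
def CondC (T : Set Curve) : Prop := ∃ c ∈ T ∪ nc T, IsConnecting c

/-- `S0` is a τ-basis of `Ω`: a subset of `Ω` such that for every `u₁ ∈ Ω` there is
`u₂ ∈ S0` with `τ u₂` crossing `u₁`, and all middle terms from `u₂` to `u₁` lie in `Ω`
whenever `u₂` crosses `u₁`. -/
def IsTauBasis (Ω S0 : Set Curve) : Prop :=
  S0 ⊆ Ω ∧ ∀ u₁ ∈ Ω, ∃ u₂ ∈ S0, Crosses (tau u₂) u₁ ∧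
    (Crosses u₂ u₁ → ∀ u₃ : Curve, IsMiddleTerm u₂ u₁ u₃ → u₃ ∈ Ω)

/-- `T` is τ-compact: for every arc `u`, the set `T_u` admits a finite τ-basis. -/
def TauCompact (T : Set Curve) : Prop :=
  ∀ u : Curve, IsArc u → ∃ S0 : Set Curve, S0.Finite ∧ IsTauBasis (crossSet T u) S0

/-- `T̄`: the set `T` together with all edges of the strip. -/
def withEdges (T : Set Curve) : Set Curve := T ∪ {c | IsEdge c}

end Strip
namespace Strip
open MPoint

lemma cross_ul_uu {i j a b : ℤ} :
    Crosses s(up i, low j) s(up a, up b) ↔ (a < i ∧ i < b) ∨ (b < i ∧ i < a) := by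
  constructor
  · intro h
    rcases h with h|h|h|h|h|h|h <;> obtain ⟨x,y,z,w,hc,h1,h2⟩ := h <;>
      simp only [Sym2.eq_iff, MPoint.up.injEq, MPoint.low.injEq, reduceCtorEq,
        and_false, false_and, or_false, false_or, and_true, true_and, or_self] at h1 h2 <;>
      omega
  · rintro (⟨h1,h2⟩|⟨h1,h2⟩)
    · exact Or.inr (Or.inr (Or.inr (Or.inr (Or.inl ⟨i,j,a,b,⟨h1,h2⟩,rfl,rfl⟩))))
    · exact Or.inr (Or.inr (Or.inr (Or.inr (Or.inl ⟨i,j,b,a,⟨h1,h2⟩,rfl,Sym2.eq_swap⟩))))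

lemma cross_ul_ll {i j a b : ℤ} :
    Crosses s(up i, low j) s(low a, low b) ↔ (a > j ∧ j > b) ∨ (b > j ∧ j > a) := by
  constructor
  · intro h
    rcases h with h|h|h|h|h|h|h <;> obtain ⟨x,y,z,w,hc,h1,h2⟩ := h <;>
      simp only [Sym2.eq_iff, MPoint.up.injEq, MPoint.low.injEq, reduceCtorEq,
        and_false, false_and, or_false, false_or, and_true, true_and, or_self] at h1 h2 <;>
      omega
  · rintro (⟨h1,h2⟩|⟨h1,h2⟩)
    · exact Or.inr (Or.inr (Or.inr (Or.inr (Or.inr (Or.inl ⟨i,j,a,b,⟨h1,h2⟩,rfl,rfl⟩)))))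
    · exact Or.inr (Or.inr (Or.inr (Or.inr (Or.inr (Or.inl ⟨i,j,b,a,⟨h1,h2⟩,rfl,Sym2.eq_swap⟩)))))

lemma cross_ul_ul {i j a b : ℤ} :
    Crosses s(up i, low j) s(up a, low b) ↔ (i > a ∧ j > b) ∨ (i < a ∧ j < b) := by
  constructor
  · intro h
    rcases h with h|h|h|h|h|h|h <;> obtain ⟨x,y,z,w,hc,h1,h2⟩ := h <;>
      simp only [Sym2.eq_iff, MPoint.up.injEq, MPoint.low.injEq, reduceCtorEq,
        and_false, false_and, or_false, false_or, and_true, true_and, or_self] at h1 h2 <;>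
      omega
  · intro h
    exact Or.inr (Or.inr (Or.inr (Or.inr (Or.inr (Or.inr ⟨i,j,a,b,h,rfl,rfl⟩)))))

lemma cross_uPe_uu {n e a b : ℤ} (h : (e < a ∧ a < n ∧ n < b) ∨ (e < b ∧ b < n ∧ n < a)) :
    Crosses s(up n, up e) s(up a, up b) := by
  rcases h with ⟨h1,h2,h3⟩|⟨h1,h2,h3⟩
  · exact Or.inl ⟨e,n,a,b, Or.inl ⟨h1,h2,h3⟩, Sym2.eq_swap, rfl⟩
  · exact Or.inl ⟨e,n,b,a, Or.inl ⟨h1,h2,h3⟩, Sym2.eq_swap, Sym2.eq_swap⟩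

lemma cross_uPe_ul {n e a b : ℤ} (h : e < a ∧ a < n) :
    Crosses s(up n, up e) s(up a, low b) :=
  Or.inr (Or.inl ⟨e,n,a,b, h, Sym2.eq_swap, rfl⟩)

lemma cross_lPe_ll {n e a b : ℤ} (h : (a > n ∧ n > b ∧ b > e) ∨ (b > n ∧ n > a ∧ a > e)) :
    Crosses s(low n, low e) s(low a, low b) := by
  rcases h with ⟨h1,h2,h3⟩|⟨h1,h2,h3⟩
  · exact Or.inr (Or.inr (Or.inl ⟨n,e,a,b, Or.inr ⟨h1,h2,h3⟩, rfl, rfl⟩))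
  · exact Or.inr (Or.inr (Or.inl ⟨n,e,b,a, Or.inr ⟨h1,h2,h3⟩, rfl, Sym2.eq_swap⟩))

lemma cross_lPe_ul {n e a b : ℤ} (h : n > b ∧ b > e) :
    Crosses s(low n, low e) s(up a, low b) :=
  Or.inr (Or.inr (Or.inr (Or.inl ⟨n,e,a,b, h, rfl, rfl⟩)))

end Strip
namespace Strip
open MPoint

lemma bdd_conn_up (T : Set Curve) (hB : CondB T) (u : Curve) (n : ℤ)
    (h0 : ∀ e, e < n → s(up n, up e) ∉ crossSet T u) :
    ∃ N, ∀ c, s(up n, low c) ∈ crossSet T u → c ≤ N := by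
  have main : (∀ N : ℤ, ∃ c, s(up n, low c) ∈ crossSet T u ∧ N < c) →
      ∀ j : ℤ, ∃ i, i < j ∧ s(up n, up i) ∈ T := by
    intro hcon
    have hnL : ¬ LowerLeftBounded T (up n) := by
      rintro ⟨j, hj⟩
      obtain ⟨c, hc, hcj⟩ := hcon j
      exact hj c hcj hc.1
    have hnU : ¬ UpperLeftBounded T (up n) := fun h => hnL ((hB (up n)).2 h)
    intro j
    by_contra hh
    push_neg at hh
    exact hnU ⟨j, hh⟩
  by_contra hcon
  push_neg at hcon
  have hcon' : ∀ N : ℤ, ∃ c, s(up n, low c) ∈ crossSet T u ∧ N < c := hcon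
  have hnU := main hcon'
  clear hcon main
  obtain ⟨⟨x, y⟩, rfl⟩ := u.exists_rep
  obtain ⟨c, ⟨hcT, hcX⟩, -⟩ := hcon' 0
  cases x with
  | up a =>
    cases y with
    | up b =>
      rcases cross_ul_uu.mp hcX with ⟨h1, h2⟩ | ⟨h1, h2⟩
      · obtain ⟨e, he, heT⟩ := hnU a
        exact h0 e (by omega) ⟨heT, cross_uPe_uu (Or.inl ⟨he, h1, h2⟩)⟩
      · obtain ⟨e, he, heT⟩ := hnU b
        exact h0 e (by omega) ⟨heT, cross_uPe_uu (Or.inr ⟨he, h1, h2⟩)⟩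
    | low b =>
      rcases cross_ul_ul.mp hcX with ⟨h1, h2⟩ | ⟨h1, h2⟩
      · obtain ⟨e, he, heT⟩ := hnU a
        exact h0 e (by omega) ⟨heT, cross_uPe_ul ⟨he, h1⟩⟩
      · obtain ⟨c', ⟨_, hcX'⟩, hc'⟩ := hcon' (max b c)
        rcases cross_ul_ul.mp hcX' with ⟨h1', h2'⟩ | ⟨h1', h2'⟩ <;> omega
  | low a =>
    cases y with
    | up b =>
      rw [show Quot.mk (Sym2.Rel MPoint) (low a, up b) = s(up b, low a) from Sym2.eq_swap] at hcX h0 hcon'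
      rcases cross_ul_ul.mp hcX with ⟨h1, h2⟩ | ⟨h1, h2⟩
      · obtain ⟨e, he, heT⟩ := hnU b
        exact h0 e (by omega) ⟨heT, cross_uPe_ul ⟨he, h1⟩⟩
      · obtain ⟨c', ⟨_, hcX'⟩, hc'⟩ := hcon' (max a c)
        rcases cross_ul_ul.mp hcX' with ⟨h1', h2'⟩ | ⟨h1', h2'⟩ <;> omega
    | low b =>
      obtain ⟨c', ⟨_, hcX'⟩, hc'⟩ := hcon' (max a b)
      rcases cross_ul_ll.mp hcX' with ⟨h1', h2'⟩ | ⟨h1', h2'⟩ <;> omega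

lemma bdd_conn_low (T : Set Curve) (hB : CondB T) (u : Curve) (n : ℤ)
    (h0 : ∀ e, e < n → s(low n, low e) ∉ crossSet T u) :
    ∃ N, ∀ c, s(low n, up c) ∈ crossSet T u → c ≤ N := by
  have hswap : ∀ c : ℤ, (s(low n, up c) : Curve) = s(up c, low n) := fun c => Sym2.eq_swap
  have main : (∀ N : ℤ, ∃ c, s(up c, low n) ∈ crossSet T u ∧ N < c) →
      ∀ j : ℤ, ∃ i, i < j ∧ s(low n, low i) ∈ T := by
    intro hcon
    have hnR : ¬ UpperRightBounded T (low n) := by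
      rintro ⟨j, hj⟩
      obtain ⟨c, hc, hcj⟩ := hcon j
      exact hj c hcj (by rw [hswap]; exact hc.1)
    have hnL : ¬ LowerRightBounded T (low n) := fun h => hnR ((hB (low n)).1 h)
    intro j
    by_contra hh
    push_neg at hh
    exact hnL ⟨j, hh⟩
  by_contra hcon
  push_neg at hcon
  have hcon' : ∀ N : ℤ, ∃ c, s(up c, low n) ∈ crossSet T u ∧ N < c := by
    intro N; obtain ⟨c, hc, hN⟩ := hcon N; exact ⟨c, by rw [← hswap]; exact hc, hN⟩
  have hnL := main hcon'
  clear hcon main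
  obtain ⟨⟨x, y⟩, rfl⟩ := u.exists_rep
  obtain ⟨c, ⟨hcT, hcX⟩, -⟩ := hcon' 0
  cases x with
  | up a =>
    cases y with
    | up b =>
      obtain ⟨c', ⟨_, hcX'⟩, hc'⟩ := hcon' (max a b)
      rcases cross_ul_uu.mp hcX' with ⟨h1', h2'⟩ | ⟨h1', h2'⟩ <;> omega
    | low b =>
      rcases cross_ul_ul.mp hcX with ⟨h1, h2⟩ | ⟨h1, h2⟩
      · obtain ⟨e, he, heT⟩ := hnL b
        exact h0 e (by omega) ⟨heT, cross_lPe_ul ⟨h2, he⟩⟩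
      · obtain ⟨c', ⟨_, hcX'⟩, hc'⟩ := hcon' (max a c)
        rcases cross_ul_ul.mp hcX' with ⟨h1', h2'⟩ | ⟨h1', h2'⟩ <;> omega
  | low a =>
    cases y with
    | up b =>
      rw [show Quot.mk (Sym2.Rel MPoint) (low a, up b) = s(up b, low a) from Sym2.eq_swap] at hcX h0 hcon'
      rcases cross_ul_ul.mp hcX with ⟨h1, h2⟩ | ⟨h1, h2⟩
      · obtain ⟨e, he, heT⟩ := hnL a
        exact h0 e (by omega) ⟨heT, cross_lPe_ul ⟨h2, he⟩⟩
      · obtain ⟨c', ⟨_, hcX'⟩, hc'⟩ := hcon' (max b c)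
        rcases cross_ul_ul.mp hcX' with ⟨h1', h2'⟩ | ⟨h1', h2'⟩ <;> omega
    | low b =>
      rcases cross_ul_ll.mp hcX with ⟨h1, h2⟩ | ⟨h1, h2⟩
      · obtain ⟨e, he, heT⟩ := hnL b
        exact h0 e (by omega) ⟨heT, cross_lPe_ll (Or.inl ⟨h1, h2, he⟩)⟩
      · obtain ⟨e, he, heT⟩ := hnL a
        exact h0 e (by omega) ⟨heT, cross_lPe_ll (Or.inr ⟨h1, h2, he⟩)⟩
end Strip
namespace Strip
open MPoint

lemma key_lt_of {a b c d : ℤ} (h : a < c ∨ (a = c ∧ b < d)) : toLex (a,b) < toLex (c,d) := by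
  rw [Prod.Lex.lt_iff]; exact h

lemma ne_endpoint {T : Set Curve} (hT : ∀ c ∈ T, IsArc c) {p x : MPoint}
    (h : s(p, x) ∈ T) : x ≠ p := by
  rintro rfl
  exact (hT _ h).1 (Sym2.mk_isDiag_iff.mpr rfl)

lemma exists_min_key (T : Set Curve) (hT : ∀ c ∈ T, IsArc c) (hB : CondB T) (u : Curve)
    (p : MPoint) (hne : ∃ x, s(p, x) ∈ crossSet T u) :
    ∃ x₀, s(p, x₀) ∈ crossSet T u ∧
      ∀ x, s(p, x) ∈ crossSet T u → x = x₀ ∨ key p x₀ < key p x := by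
  cases p with
  | up n =>
    have hnotn : ∀ e : ℤ, s(up n, up e) ∈ crossSet T u → e ≠ n := fun e h hh =>
      ne_endpoint hT h.1 (by rw [hh])
    by_cases h0 : ∃ e, e < n ∧ s(up n, up e) ∈ crossSet T u
    · obtain ⟨z₀, ⟨hz1, hz2⟩, hzmin⟩ := Int.exists_least_of_bdd
        (P := fun z => -z < n ∧ s(up n, up (-z)) ∈ crossSet T u)
        ⟨-n + 1, fun z hz => by omega⟩
        (by obtain ⟨e, he, hm⟩ := h0; exact ⟨-e, by simpa using ⟨he, hm⟩⟩)
      refine ⟨up (-z₀), hz2, fun x hx => ?_⟩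
      have hkey₀ : key (up n) (up (-z₀)) = toLex (0, z₀) := by
        simp [key, show ¬ n < -z₀ by omega]
      cases x with
      | up e =>
        have hen := hnotn e hx
        rcases lt_or_gt_of_ne hen with he | he
        · have hle := hzmin (-e) ⟨by omega, by simpa using hx⟩
          rcases eq_or_lt_of_le hle with heq | hlt
          · left; rw [show e = -z₀ by omega]
          · right
            rw [hkey₀, show key (up n) (up e) = toLex (0, -e) by
              simp [key, show ¬ n < e by omega]]
            exact key_lt_of (Or.inr ⟨rfl, by omega⟩)
        · right
          rw [hkey₀, show key (up n) (up e) = toLex (2, e) by simp [key, he]]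
          exact key_lt_of (Or.inl (by omega))
      | low c =>
        right
        rw [hkey₀, show key (up n) (low c) = toLex (1, -c) from rfl]
        exact key_lt_of (Or.inl (by omega))
    · push_neg at h0
      by_cases h1 : ∃ c, s(up n, low c) ∈ crossSet T u
      · obtain ⟨N, hN⟩ := bdd_conn_up T hB u n (fun e he hm => (h0 e he hm).elim)
        obtain ⟨z₀, hz2, hzmin⟩ := Int.exists_least_of_bdd
          (P := fun z => s(up n, low (-z)) ∈ crossSet T u)
          ⟨-N, fun z hz => by have := hN _ hz; omega⟩
          (by obtain ⟨c, hm⟩ := h1; exact ⟨-c, by simpa using hm⟩)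
        refine ⟨low (-z₀), hz2, fun x hx => ?_⟩
        have hkey₀ : key (up n) (low (-z₀)) = toLex (1, z₀) := by simp [key]
        cases x with
        | up e =>
          have hen := hnotn e hx
          have he : n < e := by
            rcases lt_or_gt_of_ne hen with he | he
            · exact absurd hx (h0 e he)
            · exact he
          right
          rw [hkey₀, show key (up n) (up e) = toLex (2, e) by simp [key, he]]
          exact key_lt_of (Or.inl (by omega))
        | low c =>
          have hle := hzmin (-c) (by simpa using hx)
          rcases eq_or_lt_of_le hle with heq | hlt
          · left; rw [show c = -z₀ by omega]
          · right
            rw [hkey₀, show key (up n) (low c) = toLex (1, -c) from rfl]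
            exact key_lt_of (Or.inr ⟨rfl, by omega⟩)
      · push_neg at h1
        obtain ⟨z₀, ⟨hz1, hz2⟩, hzmin⟩ := Int.exists_least_of_bdd
          (P := fun z => n < z ∧ s(up n, up z) ∈ crossSet T u)
          ⟨n + 1, fun z hz => by omega⟩
          (by
            obtain ⟨x, hx⟩ := hne
            cases x with
            | up e =>
              refine ⟨e, ?_, hx⟩
              rcases lt_or_gt_of_ne (hnotn e hx) with he | he
              · exact absurd hx (h0 e he)
              · exact he
            | low c => exact absurd hx (h1 c))
        refine ⟨up z₀, hz2, fun x hx => ?_⟩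
        have hkey₀ : key (up n) (up z₀) = toLex (2, z₀) := by simp [key, hz1]
        cases x with
        | up e =>
          have he : n < e := by
            rcases lt_or_gt_of_ne (hnotn e hx) with he | he
            · exact absurd hx (h0 e he)
            · exact he
          have hle := hzmin e ⟨he, hx⟩
          rcases eq_or_lt_of_le hle with heq | hlt
          · left; rw [heq]
          · right
            rw [hkey₀, show key (up n) (up e) = toLex (2, e) by simp [key, he]]
            exact key_lt_of (Or.inr ⟨rfl, hlt⟩)
        | low c => exact absurd hx (h1 c)
  | low n =>
    have hnotn : ∀ e : ℤ, s(low n, low e) ∈ crossSet T u → e ≠ n := fun e h hh =>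
      ne_endpoint hT h.1 (by rw [hh])
    by_cases h0 : ∃ e, e < n ∧ s(low n, low e) ∈ crossSet T u
    · obtain ⟨z₀, ⟨hz1, hz2⟩, hzmin⟩ := Int.exists_least_of_bdd
        (P := fun z => -z < n ∧ s(low n, low (-z)) ∈ crossSet T u)
        ⟨-n + 1, fun z hz => by omega⟩
        (by obtain ⟨e, he, hm⟩ := h0; exact ⟨-e, by simpa using ⟨he, hm⟩⟩)
      refine ⟨low (-z₀), hz2, fun x hx => ?_⟩
      have hkey₀ : key (low n) (low (-z₀)) = toLex (0, z₀) := by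
        simp [key, show ¬ n < -z₀ by omega]
      cases x with
      | low e =>
        have hen := hnotn e hx
        rcases lt_or_gt_of_ne hen with he | he
        · have hle := hzmin (-e) ⟨by omega, by simpa using hx⟩
          rcases eq_or_lt_of_le hle with heq | hlt
          · left; rw [show e = -z₀ by omega]
          · right
            rw [hkey₀, show key (low n) (low e) = toLex (0, -e) by
              simp [key, show ¬ n < e by omega]]
            exact key_lt_of (Or.inr ⟨rfl, by omega⟩)
        · right
          rw [hkey₀, show key (low n) (low e) = toLex (2, e) by simp [key, he]]
          exact key_lt_of (Or.inl (by omega))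
      | up c =>
        right
        rw [hkey₀, show key (low n) (up c) = toLex (1, -c) from rfl]
        exact key_lt_of (Or.inl (by omega))
    · push_neg at h0
      by_cases h1 : ∃ c, s(low n, up c) ∈ crossSet T u
      · obtain ⟨N, hN⟩ := bdd_conn_low T hB u n (fun e he hm => (h0 e he hm).elim)
        obtain ⟨z₀, hz2, hzmin⟩ := Int.exists_least_of_bdd
          (P := fun z => s(low n, up (-z)) ∈ crossSet T u)
          ⟨-N, fun z hz => by have := hN _ hz; omega⟩
          (by obtain ⟨c, hm⟩ := h1; exact ⟨-c, by simpa using hm⟩)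
        refine ⟨up (-z₀), hz2, fun x hx => ?_⟩
        have hkey₀ : key (low n) (up (-z₀)) = toLex (1, z₀) := by simp [key]
        cases x with
        | low e =>
          have hen := hnotn e hx
          have he : n < e := by
            rcases lt_or_gt_of_ne hen with he | he
            · exact absurd hx (h0 e he)
            · exact he
          right
          rw [hkey₀, show key (low n) (low e) = toLex (2, e) by simp [key, he]]
          exact key_lt_of (Or.inl (by omega))
        | up c =>
          have hle := hzmin (-c) (by simpa using hx)
          rcases eq_or_lt_of_le hle with heq | hlt
          · left; rw [show c = -z₀ by omega]
          · right
            rw [hkey₀, show key (low n) (up c) = toLex (1, -c) from rfl]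
            exact key_lt_of (Or.inr ⟨rfl, by omega⟩)
      · push_neg at h1
        obtain ⟨z₀, ⟨hz1, hz2⟩, hzmin⟩ := Int.exists_least_of_bdd
          (P := fun z => n < z ∧ s(low n, low z) ∈ crossSet T u)
          ⟨n + 1, fun z hz => by omega⟩
          (by
            obtain ⟨x, hx⟩ := hne
            cases x with
            | low e =>
              refine ⟨e, ?_, hx⟩
              rcases lt_or_gt_of_ne (hnotn e hx) with he | he
              · exact absurd hx (h0 e he)
              · exact he
            | up c => exact absurd hx (h1 c))
        refine ⟨low z₀, hz2, fun x hx => ?_⟩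
        have hkey₀ : key (low n) (low z₀) = toLex (2, z₀) := by simp [key, hz1]
        cases x with
        | low e =>
          have he : n < e := by
            rcases lt_or_gt_of_ne (hnotn e hx) with he | he
            · exact absurd hx (h0 e he)
            · exact he
          have hle := hzmin e ⟨he, hx⟩
          rcases eq_or_lt_of_le hle with heq | hlt
          · left; rw [heq]
          · right
            rw [hkey₀, show key (low n) (low e) = toLex (2, e) by simp [key, he]]
            exact key_lt_of (Or.inr ⟨rfl, hlt⟩)
        | up c => exact absurd hx (h1 c)
end Strip
namespace Strip
open MPoint

lemma eq_of_smk {p x y : MPoint} (hx : x ≠ p) (h : s(p, x) = s(p, y)) : x = y := by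
  rw [Sym2.eq_iff] at h
  rcases h with ⟨-, h⟩ | ⟨h1, h2⟩
  · exact h
  · exact absurd h2 hx

end Strip

open Strip MPoint in
theorem exists_unique_minimal' (T : Set Curve) (hT : ∀ c ∈ T, IsArc c) (hB : CondB T)
    (u : Curve) (hu : IsArc u) (p : MPoint)
    (hne : ∃ v ∈ crossSet T u, p ∈ v) :
    ∃! m : Curve, (m ∈ crossSet T u ∧ p ∈ m) ∧
      ∀ v ∈ crossSet T u, p ∈ v → v = m ∨ GtAt p v m := by
  obtain ⟨v, hv, hpv⟩ := hne
  obtain ⟨x, rfl⟩ := Sym2.mem_iff_exists.mp hpv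
  obtain ⟨x₀, hx₀m, hmin⟩ := exists_min_key T hT hB u p ⟨x, hv⟩
  have hx₀p : x₀ ≠ p := ne_endpoint hT hx₀m.1
  have hmin' : ∀ v ∈ crossSet T u, p ∈ v → v = s(p, x₀) ∨ GtAt p v s(p, x₀) := by
    intro w hw hpw
    obtain ⟨y, rfl⟩ := Sym2.mem_iff_exists.mp hpw
    rcases hmin y hw with rfl | hlt
    · exact Or.inl rfl
    · exact Or.inr ⟨y, x₀, ne_endpoint hT hw.1, hx₀p, rfl, rfl, hlt⟩
  refine ⟨s(p, x₀), ⟨⟨hx₀m, Sym2.mem_mk_left p x₀⟩, hmin'⟩, ?_⟩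
  rintro m ⟨⟨hm, hpm⟩, hmmin⟩
  obtain ⟨y, rfl⟩ := Sym2.mem_iff_exists.mp hpm
  rcases hmin y hm with rfl | hlt
  · rfl
  · rcases hmmin s(p, x₀) hx₀m (Sym2.mem_mk_left p x₀) with heq | hgt
    · exact heq.symm
    · exfalso
      obtain ⟨x', y', hx', hy', h1, h2, hk⟩ := hgt
      have hx'x₀ : x' = x₀ := (eq_of_smk hx₀p h1).symm
      have hy'y : y' = y := (eq_of_smk (ne_endpoint hT hm.1) h2).symm
      rw [hx'x₀, hy'y] at hk
      exact absurd hlt (not_lt_of_gt hk)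


open Strip in
/-- If `T` satisfies condition (B), then for every arc `u` and marked point `p`,
a nonempty `T_u ∩ [p,−]` contains a unique minimal element for `>_p`. -/
theorem exists_unique_minimal (T : Set Curve) (hT : ∀ c ∈ T, IsArc c) (hB : CondB T)
    (u : Curve) (hu : IsArc u) (p : MPoint)
    (hne : ∃ v ∈ crossSet T u, p ∈ v) :
    ∃! m : Curve, (m ∈ crossSet T u ∧ p ∈ m) ∧
      ∀ v ∈ crossSet T u, p ∈ v → v = m ∨ GtAt p v m :=
  exists_unique_minimal' T hT hB u hu p hne
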